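/- arXiv:2207.08487 — 2 statements merged into one kernel-verified Lean document; each statement's English description precedes it below -/
import Mathlib

section
/- Let A be a discrete small category, let F, G : A ⥤ B be two functors into a small category B, and let Q : B ⥤ Q be the coequalizer of F and G in Cat. If f : X ⟶ Y and g : X' ⟶ Y' are two non-identity morphisms of B such that Q(X) = Q(X'), Q(Y) = Q(Y'), and Q(f) and Q(g) are equal as morphisms of Q (after transporting along these equalities of objects), then X = X', Y = Y', and f = g. -/
/-!
Because `A` is discrete, any functor out of `B` that identifies each `F a` with `G a` coequalizes
`F` and `G`; in particular every functor from `B` into a one-object category does. For the monoid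
we take the endomaps of the set of reduced words in `B`: lists of non-identity morphisms in which
no two neighbours compose. A morphism acts on a word by composing onto its last letter (erasing
it if the composite is an identity), as in van der Waerden's normal form argument for free
products. A non-identity morphism `f` sends the empty word to the one-letter word `[f]`, so this
functor, and hence the coequalizer through which it factors, is injective on non-identity
morphisms.
-/

open CategoryTheory Limits

universe u

theorem Option.toList_injective {α : Type*} :
    Function.Injective (Option.toList : Option α → List α) := by
  rintro (_ | a) (_ | b) h <;> simp_all

namespace CategoryTheory

theorem Functor.ext_of_forall_eq_eqToHom {A C : Type*} [Category A] [Category C]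
    (hA : ∀ (X Y : A) (f : X ⟶ Y), ∃ h : X = Y, f = eqToHom h) {F G : A ⥤ C}
    (h_obj : ∀ X, F.obj X = G.obj X) : F = G :=
  Functor.ext h_obj fun X Y f => by obtain ⟨rfl, rfl⟩ := hA X Y f; simp

namespace ReducedWord

variable {B : Type*} [Category B]

structure Letter (B : Type*) [Category B] where
  src : B
  tgt : B
  hom : src ⟶ tgt
  not_eqToHom : ¬ ∃ h : src = tgt, hom = eqToHom h

namespace Letter

open Classical in
noncomputable def ofHom {X Y : B} (φ : X ⟶ Y) : Option (Letter B) :=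
  if h : ∃ e : X = Y, φ = eqToHom e then none else some ⟨X, Y, φ, h⟩

@[simp]
theorem ofHom_eqToHom {X Y : B} (h : X = Y) : ofHom (eqToHom h) = none :=
  dif_pos ⟨h, rfl⟩

@[simp]
theorem ofHom_id (X : B) : ofHom (𝟙 X) = none :=
  ofHom_eqToHom rfl

theorem ofHom_of_not_eqToHom {X Y : B} {φ : X ⟶ Y} (hφ : ¬ ∃ e : X = Y, φ = eqToHom e) :
    ofHom φ = some ⟨X, Y, φ, hφ⟩ :=
  dif_neg hφ

theorem eq_of_ofHom_eq {X Y X' Y' : B} {f : X ⟶ Y} {g : X' ⟶ Y'}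
    (hf : ¬ ∃ h : X = Y, f = eqToHom h) (hfg : ofHom f = ofHom g) :
    ∃ (hX : X = X') (hY : Y = Y'), f = eqToHom hX ≫ g ≫ eqToHom hY.symm := by
  by_cases hg : ∃ h : X' = Y', g = eqToHom h
  · obtain ⟨rfl, rfl⟩ := hg
    simp [ofHom_of_not_eqToHom hf] at hfg
  · rw [ofHom_of_not_eqToHom hf, ofHom_of_not_eqToHom hg, Option.some_inj] at hfg
    cases hfg
    exact ⟨rfl, rfl, by simp⟩

end Letter

/-- In `a :: b :: w` the letter `b` comes first, i.e. the word stands for `… ≫ b ≫ a`. -/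
def IsReduced (w : List (Letter B)) : Prop :=
  w.IsChain fun a b => b.tgt ≠ a.src

open Classical in
noncomputable def push {X Y : B} (φ : X ⟶ Y) : List (Letter B) → List (Letter B)
  | [] => (Letter.ofHom φ).toList
  | b :: w =>
    if h : b.tgt = X then (Letter.ofHom (b.hom ≫ eqToHom h ≫ φ)).toList ++ w
    else (Letter.ofHom φ).toList ++ b :: w

@[simp]
theorem push_nil {X Y : B} (φ : X ⟶ Y) : push φ [] = (Letter.ofHom φ).toList := rfl

theorem push_cons_of_eq {X Y Z W : B} (φ : X ⟶ Y) (β : Z ⟶ W) (hβ) (h : W = X)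
    (w : List (Letter B)) :
    push φ (⟨Z, W, β, hβ⟩ :: w) = (Letter.ofHom (β ≫ eqToHom h ≫ φ)).toList ++ w :=
  dif_pos h

theorem push_cons_of_ne {X Y : B} (φ : X ⟶ Y) (b : Letter B) (h : b.tgt ≠ X)
    (w : List (Letter B)) : push φ (b :: w) = (Letter.ofHom φ).toList ++ b :: w :=
  dif_neg h

theorem push_id (X : B) (w : List (Letter B)) : push (𝟙 X) w = w := by
  rcases w with _ | ⟨⟨Z, W, β, hβ⟩, w⟩
  · simp
  by_cases h : W = X
  · subst h
    simp [push_cons_of_eq _ _ _ rfl, Letter.ofHom_of_not_eqToHom hβ]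
  · simp [push_cons_of_ne _ ⟨Z, W, β, hβ⟩ h]

theorem IsReduced.push {w : List (Letter B)} (hw : IsReduced w) {X Y : B} (φ : X ⟶ Y) :
    IsReduced (push φ w) := by
  rcases w with _ | ⟨⟨V, W, β, hβ⟩, w⟩
  · rw [push_nil]
    rcases Letter.ofHom φ with _ | a
    exacts [List.isChain_nil, List.isChain_singleton a]
  by_cases hWX : W = X
  · subst hWX
    rw [push_cons_of_eq _ _ _ rfl]
    by_cases hβφ : ∃ e : V = Y, β ≫ eqToHom rfl ≫ φ = eqToHom e
    · obtain ⟨rfl, hβφ⟩ := hβφ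
      rw [hβφ, Letter.ofHom_eqToHom]
      exact hw.tail
    · rw [Letter.ofHom_of_not_eqToHom hβφ]
      exact List.isChain_cons.mpr (List.isChain_cons.mp hw)
  · rw [push_cons_of_ne _ ⟨V, W, β, hβ⟩ hWX]
    by_cases hφ : ∃ e : X = Y, φ = eqToHom e
    · obtain ⟨rfl, rfl⟩ := hφ
      simpa using hw
    · rw [Letter.ofHom_of_not_eqToHom hφ]
      exact List.isChain_cons_cons.mpr ⟨hWX, hw⟩

theorem push_comp {X Y Z : B} (φ : X ⟶ Y) (ψ : Y ⟶ Z) {w : List (Letter B)}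
    (hw : IsReduced w) :
    push (φ ≫ ψ) w = push ψ (push φ w) := by
  rcases w with _ | ⟨⟨V, W, β, hβ⟩, w⟩
  · by_cases hφ : ∃ e : X = Y, φ = eqToHom e
    · obtain ⟨rfl, rfl⟩ := hφ
      simp
    · simp [Letter.ofHom_of_not_eqToHom hφ, push_cons_of_eq _ _ _ rfl]
  by_cases hWX : W = X
  · subst hWX
    rw [push_cons_of_eq _ _ _ rfl, push_cons_of_eq _ _ _ rfl]
    by_cases hβφ : ∃ e : V = Y, β ≫ eqToHom rfl ≫ φ = eqToHom e
    · obtain ⟨rfl, hβφ⟩ := hβφ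
      have hβφψ : β ≫ eqToHom rfl ≫ φ ≫ ψ = ψ := by simp_all [← Category.assoc]
      rw [hβφ, Letter.ofHom_eqToHom, Option.toList_none, List.nil_append, hβφψ]
      rcases w with _ | ⟨c, w⟩
      · simp
      · have hc : c.tgt ≠ V := (List.isChain_cons_cons.mp hw).1
        rw [push_cons_of_ne _ _ hc]
    · rw [Letter.ofHom_of_not_eqToHom hβφ, Option.toList_some, List.singleton_append,
        push_cons_of_eq _ _ _ rfl]
      simp
  · rw [push_cons_of_ne _ ⟨V, W, β, hβ⟩ hWX, push_cons_of_ne _ ⟨V, W, β, hβ⟩ hWX]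
    by_cases hφ : ∃ e : X = Y, φ = eqToHom e
    · obtain ⟨rfl, rfl⟩ := hφ
      simp [push_cons_of_ne _ ⟨V, W, β, hβ⟩ hWX]
    · rw [Letter.ofHom_of_not_eqToHom hφ, Option.toList_some, List.singleton_append,
        push_cons_of_eq _ _ _ rfl]
      simp

def Word (B : Type*) [Category B] : Type _ := {w : List (Letter B) // IsReduced w}

noncomputable def act {X Y : B} (φ : X ⟶ Y) : Function.End (Word B) :=
  fun w => ⟨push φ w.1, w.2.push φ⟩

noncomputable def wordFunctor (B : Type*) [Category B] :
    B ⥤ SingleObj (Function.End (Word B)) where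
  obj _ := SingleObj.star _
  map := act
  map_id X := funext fun w => Subtype.ext (push_id X w.1)
  map_comp φ ψ := funext fun w => Subtype.ext (push_comp φ ψ w.2)

theorem eq_of_wordFunctor_map_eq {X Y X' Y' : B} {f : X ⟶ Y} {g : X' ⟶ Y'}
    (hf : ¬ ∃ h : X = Y, f = eqToHom h) (hfg : (wordFunctor B).map f = (wordFunctor B).map g) :
    ∃ (hX : X = X') (hY : Y = Y'), f = eqToHom hX ≫ g ≫ eqToHom hY.symm :=
  Letter.eq_of_ofHom_eq hf <| Option.toList_injective <|
    congrArg Subtype.val (congrFun hfg ⟨[], List.isChain_nil⟩)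

section

attribute [local instance] uliftCategory

/-- `SingleObj` lives in `Type`, so its objects are lifted to land in `Cat.{u, u}`. -/
noncomputable def toWordCat (B : Cat.{u, u}) :
    B ⟶ Cat.of (ULift.{u} (SingleObj (Function.End (Word B)))) :=
  (wordFunctor B ⋙ ULift.upFunctor).toCatHom

theorem eqToHom_comp_comp_eqToHom_ulift_singleObj {M : Type*} [Monoid M]
    {a b c d : ULift.{u} (SingleObj M)} (h₁ : a = b) (m : b ⟶ c) (h₂ : c = d) :
    (eqToHom h₁ ≫ m ≫ eqToHom h₂ : M) = m := by
  subst h₁ h₂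
  simp

end

end ReducedWord
end CategoryTheory

open CategoryTheory.ReducedWord

theorem coequalizer_of_discrete_inj_on_nonidentity_general
    (A B : Cat.{u, u})
    (hA : ∀ (X Y : A) (f : X ⟶ Y), ∃ h : X = Y, f = eqToHom h)
    (F G : A ⟶ B) (c : Cofork F G) (hc : IsColimit c)
    {X Y X' Y' : B} (f : X ⟶ Y) (g : X' ⟶ Y')
    (hf : ¬ ∃ h : X = Y, f = eqToHom h)
    (hX : c.π.toFunctor.obj X = c.π.toFunctor.obj X') (hY : c.π.toFunctor.obj Y = c.π.toFunctor.obj Y')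
    (hfg : c.π.toFunctor.map f = eqToHom hX ≫ c.π.toFunctor.map g ≫ eqToHom hY.symm) :
    ∃ (hX' : X = X') (hY' : Y = Y'), f = eqToHom hX' ≫ g ≫ eqToHom hY'.symm := by
  have hcomm : F ≫ toWordCat B = G ≫ toWordCat B :=
    Cat.Hom.ext (Functor.ext_of_forall_eq_eqToHom hA fun _ => rfl)
  have hπ := Cofork.IsColimit.π_desc' hc (toWordCat B) hcomm
  refine eq_of_wordFunctor_map_eq hf ?_
  change (toWordCat B).toFunctor.map f = (toWordCat B).toFunctor.map g
  rw [← hπ, Cat.Hom.comp_map, Cat.Hom.comp_map, hfg, Functor.map_comp, Functor.map_comp,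
    eqToHom_map, eqToHom_map]
  exact eqToHom_comp_comp_eqToHom_ulift_singleObj _ _ _

/-- Let `Q = c.π` be the coequalizer in `Cat` of two functors defined on a discrete
category.  If `f` and `g` are non-identity morphisms of `B` whose images under `Q`
coincide (after transporting along the equalities of the objects), then `f` and `g`
coincide. -/
theorem coequalizer_of_discrete_inj_on_nonidentity
    (A B : Cat.{u, u})
    (hA : ∀ (X Y : A) (f : X ⟶ Y), ∃ h : X = Y, f = eqToHom h)
    (F G : A ⟶ B) (c : Cofork F G) (hc : IsColimit c)
    {X Y X' Y' : B} (f : X ⟶ Y) (g : X' ⟶ Y')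
    (hf : ¬ ∃ h : X = Y, f = eqToHom h)
    (hg : ¬ ∃ h : X' = Y', g = eqToHom h)
    (hX : c.π.toFunctor.obj X = c.π.toFunctor.obj X') (hY : c.π.toFunctor.obj Y = c.π.toFunctor.obj Y')
    (hfg : c.π.toFunctor.map f = eqToHom hX ≫ c.π.toFunctor.map g ≫ eqToHom hY.symm) :
    ∃ (hX' : X = X') (hY' : Y = Y'), f = eqToHom hX' ≫ g ≫ eqToHom hY'.symm :=
  coequalizer_of_discrete_inj_on_nonidentity_general A B hA F G c hc f g hf hX hY hfg
end

section
/- Let A be a discrete small category, let F, G : A ⥤ B be two functors into a small category B, and let Q : B ⥤ Q be the coequalizer of F and G in Cat. A morphism φ of Q is an isomorphism if and only if φ belongs to the smallest class of morphisms of Q that contains all morphisms induced by equalities of objects of Q (the eqToHom morphisms), contains Q(g) for every isomorphism g of B, and is closed under composition. -/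
open CategoryTheory Limits

universe u

/-- The smallest class of morphisms of the codomain of a functor `F : B ⥤ Q` which
contains all `eqToHom` morphisms, contains the image `F.map g` of every isomorphism
`g` of `B`, and is closed under composition. -/
inductive IsoGenerated {B Q : Type u} [Category.{u} B] [Category.{u} Q] (F : B ⥤ Q) :
    ∀ {X Y : Q}, (X ⟶ Y) → Prop
  | eqToHom {X Y : Q} (h : X = Y) : IsoGenerated F (CategoryTheory.eqToHom h)
  | img {X Y : B} (g : X ⟶ Y) (hg : IsIso g) : IsoGenerated F (F.map g)
  | comp {X Y Z : Q} {f : X ⟶ Y} {g : Y ⟶ Z} :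
      IsoGenerated F f → IsoGenerated F g → IsoGenerated F (f ≫ g)

universe v

/-!
A morphism of the coequalizer `Q` is a composite of `eqToHom`s and images of morphisms of `B`,
i.e. it is represented by a word in the morphisms of `B`. As `A` is discrete, passing to `Q` only
glues objects, so `B` acts on reduced words (no `eqToHom` letters, no two adjacent letters
composable in `B`) by appending a letter and composing it with the last one where possible, and
this action factors through `Q`. If `φ` and `ψ` are mutually inverse, represented by reduced words
`w` and `v`, then `v` acting on `w` gives the empty word. This forces the letters of `v` to cancel
those of `w` one by one, so every letter of `w` has a right inverse in `B`, and by symmetry a left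
inverse.
-/

theorem IsoGenerated.isIso {B Q : Type u} [Category.{u} B] [Category.{u} Q] {π : B ⥤ Q}
    {X Y : Q} {φ : X ⟶ Y} (h : IsoGenerated π φ) : IsIso φ := by
  induction h <;> infer_instance

namespace CategoryTheory

section

variable {B : Type*} [Category B]

def IsEqToHom {a b : B} (f : a ⟶ b) : Prop := ∃ h : a = b, f = eqToHom h

lemma isEqToHom_eqToHom {a b : B} (h : a = b) : IsEqToHom (eqToHom h) := ⟨h, rfl⟩

namespace Arrow

def ComposesToId (l x : Arrow B) : Prop :=
  ∃ h : l.right = x.left, IsEqToHom (l.hom ≫ eqToHom h ≫ x.hom)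

lemma isIso_hom_of_composesToId {l x z : Arrow B} (hx : l.ComposesToId x)
    (hz : z.ComposesToId l) : IsIso l.hom := by
  obtain ⟨h₁, h₂, hlx⟩ := hx
  obtain ⟨h₃, h₄, hzl⟩ := hz
  have : IsSplitMono l.hom :=
    .mk' ⟨eqToHom h₁ ≫ x.hom ≫ eqToHom h₂.symm, by simp [reassoc_of% hlx]⟩
  have : IsSplitEpi l.hom := .mk' ⟨eqToHom h₄.symm ≫ z.hom ≫ eqToHom h₃, by simp [hzl]⟩
  exact isIso_of_mono_of_isSplitEpi _

end Arrow

end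

namespace ArrowList

section Reduction

variable {B : Type*} [Category B]

open scoped Classical in
noncomputable def consUnlessEqToHom (x : Arrow B) (w : List (Arrow B)) : List (Arrow B) :=
  if IsEqToHom x.hom then w else x :: w

open scoped Classical in
/-- Words list their letters last first: `l :: w` is `w` followed by `l`. -/
noncomputable def push (x : Arrow B) : List (Arrow B) → List (Arrow B)
  | l :: w =>
    if h : l.right = x.left then consUnlessEqToHom (Arrow.mk (l.hom ≫ eqToHom h ≫ x.hom)) w
    else consUnlessEqToHom x (l :: w)
  | [] => consUnlessEqToHom x []

def Reduced (w : List (Arrow B)) : Prop :=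
  (∀ l ∈ w, ¬ IsEqToHom l.hom) ∧ w.IsChain (fun x y => y.right ≠ x.left)

lemma reduced_nil : Reduced ([] : List (Arrow B)) := ⟨by simp, .nil⟩

lemma reduced_append {v u : List (Arrow B)} :
    Reduced (v ++ u) ↔ Reduced v ∧ Reduced u ∧
      ∀ z ∈ v.getLast?, ∀ m ∈ u.head?, m.right ≠ z.left := by
  simp only [Reduced, List.isChain_append, List.mem_append]
  grind

lemma reduced_cons {x : Arrow B} {w : List (Arrow B)} :
    Reduced (x :: w) ↔
      ¬ IsEqToHom x.hom ∧ (∀ y ∈ w.head?, y.right ≠ x.left) ∧ Reduced w := by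
  rw [← List.singleton_append, reduced_append]
  simp only [Reduced, List.mem_singleton, forall_eq, List.isChain_singleton, and_true,
    List.getLast?_singleton, Option.mem_def, Option.some.injEq, forall_eq']
  tauto

lemma consUnlessEqToHom_of_isEqToHom {x : Arrow B} (hx : IsEqToHom x.hom)
    (w : List (Arrow B)) :
    consUnlessEqToHom x w = w := if_pos hx

lemma consUnlessEqToHom_of_not_isEqToHom {x : Arrow B} (hx : ¬ IsEqToHom x.hom)
    (w : List (Arrow B)) :
    consUnlessEqToHom x w = x :: w := if_neg hx

lemma reduced_consUnlessEqToHom {x : Arrow B} {w : List (Arrow B)} (hw : Reduced w)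
    (hxw : ∀ y ∈ w.head?, y.right ≠ x.left) : Reduced (consUnlessEqToHom x w) := by
  by_cases hx : IsEqToHom x.hom
  · rwa [consUnlessEqToHom_of_isEqToHom hx]
  · rw [consUnlessEqToHom_of_not_isEqToHom hx]
    exact reduced_cons.2 ⟨hx, hxw, hw⟩

lemma push_of_forall_ne {x : Arrow B} {w : List (Arrow B)}
    (hxw : ∀ y ∈ w.head?, y.right ≠ x.left) : push x w = consUnlessEqToHom x w := by
  cases w with
  | nil => rfl
  | cons l w => exact dif_neg (hxw l rfl)

lemma push_cons_of_eq {x l : Arrow B} (h : l.right = x.left) (w : List (Arrow B)) :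
    push x (l :: w) = consUnlessEqToHom (Arrow.mk (l.hom ≫ eqToHom h ≫ x.hom)) w :=
  dif_pos h

lemma reduced_push (x : Arrow B) {w : List (Arrow B)} (hw : Reduced w) :
    Reduced (push x w) := by
  cases w with
  | nil => exact reduced_consUnlessEqToHom hw (by simp)
  | cons l w =>
    by_cases h : l.right = x.left
    · obtain ⟨-, hlw, hw⟩ := reduced_cons.1 hw
      rw [push_cons_of_eq h]
      exact reduced_consUnlessEqToHom hw hlw
    · rw [push_of_forall_ne (by simpa using h)]
      exact reduced_consUnlessEqToHom hw (by simpa using h)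

lemma push_id (a : B) {w : List (Arrow B)} (hw : Reduced w) :
    push (Arrow.mk (𝟙 a)) w = w := by
  have hid : IsEqToHom (𝟙 a) := ⟨rfl, rfl⟩
  cases w with
  | nil => exact consUnlessEqToHom_of_isEqToHom hid _
  | cons l w =>
    by_cases h : l.right = a
    · subst h
      rw [push_cons_of_eq rfl, consUnlessEqToHom_of_not_isEqToHom]
      · simp
      · simpa using (reduced_cons.1 hw).1
    · rw [push_of_forall_ne (by simpa using h), consUnlessEqToHom_of_isEqToHom hid]

lemma push_push {a b c : B} (f : a ⟶ b) (g : b ⟶ c) {w : List (Arrow B)} (hw : Reduced w) :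
    push (Arrow.mk g) (push (Arrow.mk f) w) = push (Arrow.mk (f ≫ g)) w := by
  by_cases hf : IsEqToHom f
  · obtain ⟨rfl, rfl⟩ := hf
    simp [push_id a hw]
  obtain ⟨l, w, rfl, rfl⟩ | hnc :
      (∃ l w', w = l :: w' ∧ l.right = a) ∨ ∀ y ∈ w.head?, y.right ≠ a := by
    cases w with
    | nil => simp
    | cons l w => by_cases h : l.right = a <;> simp [h]
  · obtain ⟨-, hlw, -⟩ := reduced_cons.1 hw
    rw [push_cons_of_eq rfl, push_cons_of_eq rfl]
    by_cases hlf : IsEqToHom (l.hom ≫ f)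
    · obtain ⟨rfl, hlf⟩ := hlf
      have hid : IsEqToHom (Arrow.mk (l.hom ≫ eqToHom rfl ≫ (Arrow.mk f).hom)).hom := by
        simpa [hlf] using isEqToHom_eqToHom (rfl : l.left = l.left)
      rw [consUnlessEqToHom_of_isEqToHom hid, push_of_forall_ne (x := Arrow.mk g) hlw]
      simp [reassoc_of% hlf]
    · rw [consUnlessEqToHom_of_not_isEqToHom (by simpa using hlf), push_cons_of_eq rfl]
      simp
  · rw [push_of_forall_ne (x := Arrow.mk f) hnc, consUnlessEqToHom_of_not_isEqToHom hf,
      push_cons_of_eq rfl, push_of_forall_ne hnc]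
    simp

lemma foldr_push_eq_append {v u : List (Arrow B)} (h : Reduced (v ++ u)) :
    v.foldr push u = v ++ u := by
  induction v with
  | nil => rfl
  | cons x v ih =>
    rw [List.cons_append] at h
    obtain ⟨hx, hxv, hvu⟩ := reduced_cons.1 h
    rw [List.foldr_cons, ih hvu, push_of_forall_ne hxv, consUnlessEqToHom_of_not_isEqToHom hx,
      List.cons_append]

lemma foldr_push_nil {w : List (Arrow B)} (h : Reduced w) : w.foldr push [] = w := by
  simpa using foldr_push_eq_append (u := []) (by simpa using h)

lemma push_cons_of_composesToId {l x : Arrow B} (h : l.ComposesToId x) (w : List (Arrow B)) :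
    push x (l :: w) = w := by
  obtain ⟨h, hid⟩ := h
  rw [push_cons_of_eq h, consUnlessEqToHom_of_isEqToHom hid]

lemma exists_push_eq_cons {y : Arrow B} {u : List (Arrow B)} (hu : Reduced u)
    (hy : ¬ IsEqToHom y.hom) (hnc : ∀ l u', u = l :: u' → ¬ l.ComposesToId y) :
    ∃ m u', push y u = m :: u' ∧ m.right = y.right ∧ Reduced (m :: u') := by
  cases u with
  | nil =>
    refine ⟨y, [], ?_, rfl, reduced_cons.2 ⟨hy, by simp, reduced_nil⟩⟩
    rw [push_of_forall_ne (by simp), consUnlessEqToHom_of_not_isEqToHom hy]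
  | cons l u =>
    by_cases hc : l.right = y.left
    · have hm : ¬ IsEqToHom (l.hom ≫ eqToHom hc ≫ y.hom) := fun h => hnc l u rfl ⟨hc, h⟩
      obtain ⟨-, hlu, hu⟩ := reduced_cons.1 hu
      refine ⟨Arrow.mk (l.hom ≫ eqToHom hc ≫ y.hom), u, ?_, rfl,
        reduced_cons.2 ⟨hm, hlu, hu⟩⟩
      rw [push_cons_of_eq hc, consUnlessEqToHom_of_not_isEqToHom hm]
    · refine ⟨y, l :: u, ?_, rfl, reduced_cons.2 ⟨hy, by simpa using hc, hu⟩⟩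
      rw [push_of_forall_ne (by simpa using hc), consUnlessEqToHom_of_not_isEqToHom hy]

lemma composesToId_of_foldr_push_eq_nil {v u : List (Arrow B)} (hv : Reduced v)
    (hu : Reduced u) (h : v.foldr push u = []) :
    (∀ l ∈ u, ∃ x : Arrow B, l.ComposesToId x) ∧
      ∀ x ∈ v, ∃ l : Arrow B, l.ComposesToId x := by
  induction v using List.reverseRecOn generalizing u with
  | nil => simp_all
  | append_singleton v y ih =>
    rw [List.foldr_append, List.foldr_cons, List.foldr_nil] at h
    obtain ⟨hv, hy, hvy⟩ := reduced_append.1 hv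
    -- Unless `y` cancels the last letter of `u`, the word `v ++ push y u` is reduced, and the
    -- letters of `v` act on `push y u` by concatenation.
    by_cases hcancel : ∃ l u', u = l :: u' ∧ l.ComposesToId y
    · obtain ⟨l, u, rfl, hly⟩ := hcancel
      rw [push_cons_of_composesToId hly] at h
      obtain ⟨hu', hv'⟩ := ih hv (reduced_cons.1 hu).2.2 h
      constructor
      · simpa using ⟨⟨y, hly⟩, hu'⟩
      · simp only [List.mem_append, List.mem_singleton]
        rintro x (hx | rfl)
        exacts [hv' x hx, ⟨l, hly⟩]
    · obtain ⟨m, u', hpush, hm, hmu⟩ := exists_push_eq_cons hu (reduced_cons.1 hy).1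
        (fun l u' hu' hly => hcancel ⟨l, u', hu', hly⟩)
      have hred : Reduced (v ++ m :: u') :=
        reduced_append.2 ⟨hv, hmu, fun z hz m' hm' => by
          obtain rfl : m' = m := by simpa using hm'.symm
          exact hm ▸ hvy z hz y rfl⟩
      rw [hpush, foldr_push_eq_append hred] at h
      simp at h

lemma reduced_foldr_push (v : List (Arrow B)) {u : List (Arrow B)} (hu : Reduced u) :
    Reduced (v.foldr push u) := by
  induction v with
  | nil => exact hu
  | cons x v ih => exact reduced_push x ih

end Reduction

section Evaluation

variable {B Q : Type*} [Category B] [Category Q] (π : B ⥤ Q)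

inductive Evaluates : List (Arrow B) → ∀ {X Y : Q}, (X ⟶ Y) → Prop
  | nil {X Y : Q} (h : X = Y) : Evaluates [] (eqToHom h)
  | cons {X Y : Q} (l : Arrow B) {w : List (Arrow B)} {ψ : X ⟶ π.obj l.left}
      (hw : Evaluates w ψ) (h : π.obj l.right = Y) :
      Evaluates (l :: w) (ψ ≫ π.map l.hom ≫ eqToHom h)

variable {π}

namespace Evaluates

lemma comp_eqToHom {w : List (Arrow B)} {X Y Y' : Q} {φ : X ⟶ Y} (hw : Evaluates π w φ)
    (h : Y = Y') : Evaluates π w (φ ≫ eqToHom h) := by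
  subst h
  simpa using hw

lemma append {w v : List (Arrow B)} {X Y Z : Q} {φ : X ⟶ Y} {ψ : Y ⟶ Z}
    (hw : Evaluates π w φ) (hv : Evaluates π v ψ) : Evaluates π (v ++ w) (φ ≫ ψ) := by
  induction hv with
  | nil h => simpa using hw.comp_eqToHom h
  | cons l _ h ih => simpa using cons l (ih hw) h

lemma consUnlessEqToHom {w : List (Arrow B)} {X Y : Q} {x : Arrow B} {ψ : X ⟶ π.obj x.left}
    (hw : Evaluates π w ψ) (h : π.obj x.right = Y) :
    Evaluates π (ArrowList.consUnlessEqToHom x w) (ψ ≫ π.map x.hom ≫ eqToHom h) := by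
  by_cases hx : IsEqToHom x.hom
  · obtain ⟨e, he⟩ := hx
    rw [consUnlessEqToHom_of_isEqToHom ⟨e, he⟩, he, eqToHom_map, eqToHom_trans]
    exact hw.comp_eqToHom _
  · rw [consUnlessEqToHom_of_not_isEqToHom hx]
    exact cons x hw h

lemma push {w : List (Arrow B)} {X Y : Q} {x : Arrow B} {ψ : X ⟶ π.obj x.left}
    (hw : Evaluates π w ψ) (h : π.obj x.right = Y) :
    Evaluates π (ArrowList.push x w) (ψ ≫ π.map x.hom ≫ eqToHom h) := by
  cases hw with
  | nil e => exact (nil e).consUnlessEqToHom h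
  | cons l hw' h' =>
    by_cases hc : l.right = x.left
    · rw [push_cons_of_eq hc]
      simpa [eqToHom_map] using
        hw'.consUnlessEqToHom (x := Arrow.mk (l.hom ≫ eqToHom hc ≫ x.hom)) h
    · rw [push_of_forall_ne (by simpa using hc)]
      exact (cons l hw' h').consUnlessEqToHom h

lemma foldr_push {w : List (Arrow B)} {X Y : Q} {φ : X ⟶ Y} (hw : Evaluates π w φ) :
    Evaluates π (w.foldr ArrowList.push []) φ := by
  induction hw with
  | nil h => exact nil h
  | cons l _ h ih => exact ih.push h

lemma singleton {a b : B} (f : a ⟶ b) : Evaluates π [Arrow.mk f] (π.map f) := by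
  simpa using cons (Arrow.mk f) (nil (rfl : π.obj a = π.obj a)) rfl

end Evaluates

variable (π) in
def evaluable : MorphismProperty Q := fun _ _ φ => ∃ w, Evaluates π w φ

instance : (evaluable π).IsMultiplicative where
  id_mem X := ⟨[], by simpa using Evaluates.nil (rfl : X = X)⟩
  comp_mem _ _ := fun ⟨w, hw⟩ ⟨v, hv⟩ => ⟨v ++ w, hw.append hv⟩

end Evaluation

lemma isoGenerated_of_evaluates {B Q : Type u} [Category.{u} B] [Category.{u} Q] {π : B ⥤ Q}
    {w : List (Arrow B)} {X Y : Q} {φ : X ⟶ Y} (hw : Evaluates π w φ)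
    (hiso : ∀ l ∈ w, IsIso l.hom) : IsoGenerated π φ := by
  induction hw with
  | nil h => exact .eqToHom h
  | cons l _ h ih =>
    exact .comp (ih fun l' hl' => hiso l' (List.mem_cons_of_mem _ hl'))
      (.comp (.img l.hom (hiso l List.mem_cons_self)) (.eqToHom h))

section Action

variable {B Q : Type*} [Category B] [Category Q]

def ReducedWord (B : Type*) [Category B] := {w : List (Arrow B) // Reduced w}

/-- `SingleObj` lives in `Type`; the `ULift` puts this category in `Cat.{u, u}`. -/
def EndCat (B : Type*) [Category B] :=
  ULift.{u} (SingleObj (Function.End (ReducedWord B)))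

instance : Category (EndCat.{u} B) := uliftCategory _

lemma EndCat.eqToHom_eq_one {x y : EndCat.{u} B} (h : x = y) :
    @Eq (Function.End (ReducedWord B)) (eqToHom h) 1 := by
  cases h
  rfl

noncomputable def action : B ⥤ EndCat.{u} B where
  obj _ := ⟨SingleObj.star _⟩
  map f s := ⟨push (Arrow.mk f) s.1, reduced_push _ s.2⟩
  map_id a := funext fun s => Subtype.ext (push_id a s.2)
  map_comp f g := funext fun s => Subtype.ext (push_push f g s.2).symm

lemma map_apply_of_evaluates {π : B ⥤ Q} {L : Q ⥤ EndCat.{u} B}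
    (hL : π ⋙ L = action) {w : List (Arrow B)} {X Y : Q} {φ : X ⟶ Y}
    (hw : Evaluates π w φ) (s : ReducedWord B) :
    ((L.map φ : Function.End (ReducedWord B)) s).1 = w.foldr push s.1 := by
  have hmap {a b : B} (f : a ⟶ b) :
      (L.map (π.map f) : Function.End (ReducedWord B)) = action.{u}.map f := by
    have := Functor.congr_hom hL f
    rw [EndCat.eqToHom_eq_one, EndCat.eqToHom_eq_one] at this
    exact this
  induction hw with
  | nil h => rw [eqToHom_map, EndCat.eqToHom_eq_one]; rfl
  | cons l _ h ih =>
    rw [Functor.map_comp, Functor.map_comp, eqToHom_map, hmap, EndCat.eqToHom_eq_one]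
    change push (Arrow.mk l.hom) (L.map _ s).1 = _
    rw [ih, Arrow.mk_eq, List.foldr_cons]

lemma foldr_push_eq_nil_of_comp_eq_id {π : B ⥤ Q} {L : Q ⥤ EndCat.{u} B}
    (hL : π ⋙ L = action) {w v : List (Arrow B)} {X Y : Q} {φ : X ⟶ Y} {ψ : Y ⟶ X}
    (hw : Evaluates π w φ) (hv : Evaluates π v ψ) (hw' : Reduced w) (h : φ ≫ ψ = 𝟙 X) :
    v.foldr push w = [] := by
  have := map_apply_of_evaluates hL (hw.append hv) ⟨[], reduced_nil⟩
  rw [h, L.map_id, List.foldr_append, foldr_push_nil hw'] at this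
  exact this.symm

end Action

theorem isoGenerated_of_isIso {B Q : Type u} [Category.{u} B] [Category.{u} Q] (π : B ⥤ Q)
    (hπ : ∀ {X Y : Q} (φ : X ⟶ Y), evaluable π φ) (L : Q ⥤ EndCat.{u} B)
    (hL : π ⋙ L = action) {X Y : Q} (φ : X ⟶ Y) [IsIso φ] : IsoGenerated π φ := by
  obtain ⟨w, hw⟩ := hπ φ
  obtain ⟨v, hv⟩ := hπ (inv φ)
  have hw' := reduced_foldr_push w reduced_nil
  have hv' := reduced_foldr_push v reduced_nil
  have hwv := composesToId_of_foldr_push_eq_nil hv' hw'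
    (foldr_push_eq_nil_of_comp_eq_id hL hw.foldr_push hv.foldr_push hw' (IsIso.hom_inv_id φ))
  have hvw := composesToId_of_foldr_push_eq_nil hw' hv'
    (foldr_push_eq_nil_of_comp_eq_id hL hv.foldr_push hw.foldr_push hv' (IsIso.inv_hom_id φ))
  refine isoGenerated_of_evaluates hw.foldr_push fun l hl => ?_
  obtain ⟨x, hx⟩ := hwv.1 l hl
  obtain ⟨z, hz⟩ := hvw.2 l hl
  exact Arrow.isIso_hom_of_composesToId hx hz

end ArrowList

lemma Functor.ext_of_discrete {A C : Type*} [Category A] [Category C]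
    (hA : ∀ (X Y : A) (f : X ⟶ Y), ∃ h : X = Y, f = eqToHom h) {H K : A ⥤ C}
    (h : ∀ a, H.obj a = K.obj a) : H = K := by
  refine Functor.ext h fun X Y f => ?_
  obtain ⟨rfl, rfl⟩ := hA X Y f
  simp

namespace Cat

variable {A B : Cat.{v, u}} {F G : A ⟶ B} {c : Cofork F G}

lemma exists_comp_eq_of_isColimit (hA : ∀ (X Y : A) (f : X ⟶ Y), ∃ h : X = Y, f = eqToHom h)
    (hc : IsColimit c) {C : Type u} [Category.{v} C] (k : B ⥤ C)
    (hk : ∀ a, k.obj (F.toFunctor.obj a) = k.obj (G.toFunctor.obj a)) :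
    ∃ L : c.pt ⥤ C, c.π.toFunctor ⋙ L = k :=
  ⟨(Cofork.IsColimit.desc hc k.toCatHom (Cat.ext (Functor.ext_of_discrete hA hk))).toFunctor,
    congrArg Cat.Hom.toFunctor (Cofork.IsColimit.π_desc' hc _ _)⟩

lemma morphismProperty_of_isColimit (hA : ∀ (X Y : A) (f : X ⟶ Y), ∃ h : X = Y, f = eqToHom h)
    (hc : IsColimit c) (P : MorphismProperty c.pt) [P.IsMultiplicative]
    (hP : ∀ {a b : B} (f : a ⟶ b), P (c.π.toFunctor.map f)) {X Y : c.pt} (φ : X ⟶ Y) :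
    P φ := by
  let k : (B : Type u) ⥤ WideSubcategory P :=
    { obj a := ⟨c.π.toFunctor.obj a⟩
      map f := ⟨c.π.toFunctor.map f, hP f⟩
      map_id a := by ext; exact c.π.toFunctor.map_id a
      map_comp f g := by ext; exact c.π.toFunctor.map_comp f g }
  obtain ⟨L, hL⟩ := exists_comp_eq_of_isColimit hA hc k fun a => by
    simp only [k, ← Functor.comp_obj, ← Cat.Hom.comp_toFunctor, c.condition]
  have hL' : L ⋙ wideSubcategoryInclusion P = 𝟭 _ :=
    congrArg Cat.Hom.toFunctor <| Cofork.IsColimit.hom_ext hc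
      (k := (L ⋙ wideSubcategoryInclusion P).toCatHom) (l := 𝟙 c.pt)
      (Cat.ext (show c.π.toFunctor ⋙ L ⋙ _ = c.π.toFunctor ⋙ 𝟭 _ by
        rw [← Functor.assoc, hL]; rfl))
  exact P.of_eq (L.map φ).2 (Functor.congr_obj hL' X) (Functor.congr_obj hL' Y)
    (Functor.congr_hom hL'.symm φ)

end Cat

end CategoryTheory

/-- Let `Q = c.π` be the coequalizer in `Cat` of two functors defined on a discrete
category.  A morphism of the coequalizer category is an isomorphism if and only if it
lies in the smallest class of morphisms containing the `eqToHom`s and the images of the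
isomorphisms of `B`, and closed under composition. -/
theorem isIso_iff_isoGenerated_coequalizer_of_discrete
    (A B : Cat.{u, u})
    (hA : ∀ (X Y : A) (f : X ⟶ Y), ∃ h : X = Y, f = eqToHom h)
    (F G : A ⟶ B) (c : Cofork F G) (hc : IsColimit c)
    {X Y : c.pt} (φ : X ⟶ Y) :
    IsIso φ ↔ IsoGenerated (c.π.toFunctor : (B : Type u) ⥤ (c.pt : Type u)) φ := by
  refine ⟨fun _ => ?_, IsoGenerated.isIso⟩
  obtain ⟨L, hL⟩ := Cat.exists_comp_eq_of_isColimit hA hc ArrowList.action fun _ => rfl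
  exact ArrowList.isoGenerated_of_isIso _ (Cat.morphismProperty_of_isColimit hA hc _
    fun f => ⟨_, ArrowList.Evaluates.singleton f⟩) L hL φ
end
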